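/- arXiv:1412.0524 — 4 statements merged into one kernel-verified Lean document; each statement's English description precedes it below -/
import Mathlib

section
/- Let τ₁, c₁, c₂ > 0 with c₂ ≤ τ₁²/(4c₁). Then the set Ω = {(x₁,x₂) ∈ ℝ² : x₂ > 0 and x₂ ≥ (τ₁/(2c₁))·|x₁|} is forward invariant for the system ẋ₁ = -τ₁x₁ + c₁x₂, ẋ₂ = -c₂|x₁|: any solution with initial condition in Ω remains in Ω for all forward times on its interval of existence. -/
open Set Filter Real
open scoped Topology

/-- Algebraic core inequality for the two barrier functions. -/
lemma stmt_3_alg (τ₁ c₁ c₂ k a b2 : ℝ) (hτ : 0 < τ₁) (hc₁ : 0 < c₁) (hc₂ : 0 < c₂)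
    (hk : 0 < k) (hk2 : 2 * c₁ * k = τ₁) (hc₂k : 2 * c₂ ≤ k * τ₁) :
    (b2 - k * a ≤ 0 →
      c₂ * |a| + k * (-τ₁ * a + c₁ * b2)
        ≤ τ₁ * (-(b2 - k * a) + max (-(b2 + k * a)) 0)) ∧
    (b2 + k * a ≤ 0 →
      c₂ * |a| - k * (-τ₁ * a + c₁ * b2)
        ≤ τ₁ * (max (-(b2 - k * a)) 0 + -(b2 + k * a))) := by
  have e2 : 2 * (k * (c₁ * b2)) = τ₁ * b2 := by rw [← hk2]; ring
  constructor
  · intro hP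
    have e4 : 0 ≤ τ₁ * (-(b2 - k * a)) := mul_nonneg hτ.le (by linarith)
    rcases abs_cases a with ⟨h1, h2⟩ | ⟨h1, h2⟩ <;>
      rcases max_cases (-(b2 + k * a)) (0 : ℝ) with ⟨h3, h4⟩ | ⟨h3, h4⟩ <;>
      rw [h1, h3]
    · have e1 : 2 * (c₂ * a) ≤ k * τ₁ * a := by
        nlinarith [mul_le_mul_of_nonneg_right hc₂k h2]
      have e3 : 0 ≤ τ₁ * (-(b2 + k * a)) := mul_nonneg hτ.le h4
      nlinarith [e1, e2, e3, e4]
    · have e1 : 2 * (c₂ * a) ≤ k * τ₁ * a := by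
        nlinarith [mul_le_mul_of_nonneg_right hc₂k h2]
      nlinarith [e1, e2, e4]
    · have e1 : 2 * (c₂ * -a) ≤ k * τ₁ * -a := by
        nlinarith [mul_le_mul_of_nonneg_right hc₂k (by linarith : (0:ℝ) ≤ -a)]
      have e3 : 0 ≤ τ₁ * (-(b2 + k * a)) := mul_nonneg hτ.le h4
      nlinarith [e1, e2, e3, e4]
    · exfalso
      have : k * a < 0 := mul_neg_of_pos_of_neg hk h2
      linarith
  · intro hQ
    have e3 : 0 ≤ τ₁ * (-(b2 + k * a)) := mul_nonneg hτ.le (by linarith)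
    rcases abs_cases a with ⟨h1, h2⟩ | ⟨h1, h2⟩ <;>
      rcases max_cases (-(b2 - k * a)) (0 : ℝ) with ⟨h3, h4⟩ | ⟨h3, h4⟩ <;>
      rw [h1, h3]
    · have e1 : 2 * (c₂ * a) ≤ k * τ₁ * a := by
        nlinarith [mul_le_mul_of_nonneg_right hc₂k h2]
      have e4 : 0 ≤ τ₁ * (-(b2 - k * a)) := mul_nonneg hτ.le h4
      nlinarith [e1, e2, e3, e4]
    · exfalso
      have : 0 ≤ k * a := mul_nonneg hk.le h2
      linarith
    · have e1 : 2 * (c₂ * -a) ≤ k * τ₁ * -a := by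
        nlinarith [mul_le_mul_of_nonneg_right hc₂k (by linarith : (0:ℝ) ≤ -a)]
      have e4 : 0 ≤ τ₁ * (-(b2 - k * a)) := mul_nonneg hτ.le h4
      have e5 : 0 ≤ τ₁ * k * -a := mul_nonneg (mul_nonneg hτ.le hk.le) (by linarith)
      nlinarith [e1, e2, e3, e4, e5]
    · have e1 : 2 * (c₂ * -a) ≤ k * τ₁ * -a := by
        nlinarith [mul_le_mul_of_nonneg_right hc₂k (by linarith : (0:ℝ) ≤ -a)]
      have e5 : 0 ≤ τ₁ * k * -a := mul_nonneg (mul_nonneg hτ.le hk.le) (by linarith)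
      nlinarith [e1, e2, e3, e5]

theorem stmt_3 (τ₁ c₁ c₂ : ℝ) (hτ : 0 < τ₁) (hc₁ : 0 < c₁) (hc₂ : 0 < c₂)
    (hcond : c₂ ≤ τ₁ ^ 2 / (4 * c₁))
    (Ω : Set (ℝ × ℝ))
    (hΩ : Ω = {p : ℝ × ℝ | 0 < p.2 ∧ τ₁ / (2 * c₁) * |p.1| ≤ p.2})
    (t₀ T : ℝ) (x₁ x₂ : ℝ → ℝ)
    (hode : ∀ t ∈ Set.Ico t₀ T,
      HasDerivAt x₁ (-τ₁ * x₁ t + c₁ * x₂ t) t ∧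
      HasDerivAt x₂ (-c₂ * |x₁ t|) t)
    (hinit : (x₁ t₀, x₂ t₀) ∈ Ω) :
    ∀ t ∈ Set.Ico t₀ T, (x₁ t, x₂ t) ∈ Ω := by
  rw [hΩ] at hinit ⊢
  obtain ⟨hx2pos', hx2ge'⟩ := hinit
  have hx2pos : 0 < x₂ t₀ := hx2pos'
  have hx2ge : τ₁ / (2 * c₁) * |x₁ t₀| ≤ x₂ t₀ := hx2ge'
  obtain ⟨k, hk_def⟩ : ∃ k : ℝ, k = τ₁ / (2 * c₁) := ⟨_, rfl⟩
  have hk : 0 < k := by rw [hk_def]; positivity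
  have hk2 : 2 * c₁ * k = τ₁ := by rw [hk_def]; field_simp
  have hc₂k : 2 * c₂ ≤ k * τ₁ := by
    rw [le_div_iff₀ (by positivity)] at hcond
    have h : k * τ₁ = τ₁ ^ 2 / (2 * c₁) := by rw [hk_def]; ring
    rw [h, le_div_iff₀ (by positivity)]
    nlinarith
  -- barrier functions
  obtain ⟨P, hP_def⟩ : ∃ P : ℝ → ℝ, P = fun t => x₂ t - k * x₁ t := ⟨_, rfl⟩
  obtain ⟨Q, hQ_def⟩ : ∃ Q : ℝ → ℝ, Q = fun t => x₂ t + k * x₁ t := ⟨_, rfl⟩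
  obtain ⟨g, hg_def⟩ : ∃ g : ℝ → ℝ, g = fun t => max (-(P t)) 0 + max (-(Q t)) 0 := ⟨_, rfl⟩
  have hg0 : ∀ t, 0 ≤ g t := fun t => by
    rw [hg_def]; exact add_nonneg (le_max_right _ _) (le_max_right _ _)
  have habs0 : |k * x₁ t₀| ≤ x₂ t₀ := by
    rw [abs_mul, abs_of_pos hk, hk_def]; exact hx2ge
  obtain ⟨hl0, hr0⟩ := abs_le.mp habs0
  have hgt₀ : g t₀ ≤ 0 := by
    simp only [hg_def, hP_def, hQ_def]
    have e1 : max (-(x₂ t₀ - k * x₁ t₀)) 0 = 0 := max_eq_right (by linarith)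
    have e2 : max (-(x₂ t₀ + k * x₁ t₀)) 0 = 0 := max_eq_right (by linarith)
    rw [e1, e2]; norm_num
  -- derivatives of P and Q
  have hPd : ∀ t ∈ Ico t₀ T,
      HasDerivAt P (-c₂ * |x₁ t| - k * (-τ₁ * x₁ t + c₁ * x₂ t)) t := fun t ht => by
    rw [hP_def]; exact (hode t ht).2.sub ((hode t ht).1.const_mul k)
  have hQd : ∀ t ∈ Ico t₀ T,
      HasDerivAt Q (-c₂ * |x₁ t| + k * (-τ₁ * x₁ t + c₁ * x₂ t)) t := fun t ht => by
    rw [hQ_def]; exact (hode t ht).2.add ((hode t ht).1.const_mul k)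
  -- main claim: g vanishes on [t₀, b] for any b < T
  have main : ∀ b ∈ Ico t₀ T, ∀ t ∈ Icc t₀ b, g t = 0 := by
    intro b hb
    have hsub : Icc t₀ b ⊆ Ico t₀ T := fun s hs => ⟨hs.1, lt_of_le_of_lt hs.2 hb.2⟩
    have hsub' : Ico t₀ b ⊆ Ico t₀ T := Ico_subset_Ico_right hb.2.le
    have hcont : ContinuousOn g (Icc t₀ b) := by
      intro s hs
      have h := hode s (hsub hs)
      have c1 := h.1.continuousAt
      have c2 := h.2.continuousAt
      have cP : ContinuousAt P s := by rw [hP_def]; exact c2.sub (c1.const_mul k)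
      have cQ : ContinuousAt Q s := by rw [hQ_def]; exact c2.add (c1.const_mul k)
      rw [hg_def]
      have : ContinuousAt (fun t => max (-(P t)) 0 + max (-(Q t)) 0) s := by
        apply ContinuousAt.add
        · exact cP.neg.max continuousAt_const
        · exact cQ.neg.max continuousAt_const
      exact this.continuousWithinAt
    have key := le_gronwallBound_of_liminf_deriv_right_le (f := g)
      (f' := fun t => 2 * τ₁ * g t) (δ := 0) (K := 2 * τ₁) (ε := 0) (a := t₀) (b := b)
      hcont ?_ hgt₀ (fun x _ => by simp)
    · intro t ht
      have := key t ht
      rw [gronwallBound_ε0_δ0] at this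
      exact le_antisymm this (hg0 t)
    · -- the liminf condition
      intro s hs r hr
      have hr' : 2 * τ₁ * g s < r := hr
      have hsT : s ∈ Ico t₀ T := hsub' hs
      obtain ⟨η, hη_def⟩ : ∃ η : ℝ, η = (r - 2 * τ₁ * g s) / 2 := ⟨_, rfl⟩
      have hη : 0 < η := by rw [hη_def]; linarith [hr']
      -- component estimate
      have comp : ∀ (V : ℝ → ℝ) (d : ℝ), HasDerivAt V d s → (V s ≤ 0 → -d ≤ τ₁ * g s) →
          ∀ᶠ z in 𝓝[>] s, (z - s)⁻¹ * (max (-(V z)) 0 - max (-(V s)) 0) < τ₁ * g s + η := by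
        intro V d hV hbd
        have hτg : 0 ≤ τ₁ * g s := mul_nonneg hτ.le (hg0 s)
        by_cases hVs : 0 < V s
        · have hmem : {z | 0 < V z} ∈ 𝓝 s :=
            hV.continuousAt.preimage_mem_nhds (Ioi_mem_nhds hVs)
          filter_upwards [nhdsWithin_le_nhds hmem] with z hz
          have hz' : 0 < V z := hz
          have e1 : max (-(V z)) 0 = 0 := max_eq_right (by linarith)
          have e2 : max (-(V s)) 0 = 0 := max_eq_right (by linarith)
          rw [e1, e2, sub_zero, mul_zero]
          linarith
        · push_neg at hVs
          have hbd' := hbd hVs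
          have hT := hasDerivAt_iff_tendsto_slope.mp hV
          have hmem : {z | d - η < slope V s z} ∈ 𝓝[≠] s :=
            hT (Ioi_mem_nhds (show d - η < d by linarith))
          have hmono : 𝓝[>] s ≤ 𝓝[≠] s :=
            nhdsWithin_mono s (fun z hz => Set.mem_compl_singleton_iff.mpr (ne_of_gt hz))
          filter_upwards [hmono hmem, self_mem_nhdsWithin] with z hz hzs
          have hzx : 0 < z - s := sub_pos.mpr hzs
          have hineq : max (-(V z)) 0 - max (-(V s)) 0 ≤ max (V s - V z) 0 := by
            have a1 := le_max_left (V s - V z) (0:ℝ)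
            have a2 := le_max_left (-(V s)) (0:ℝ)
            have h1 : -(V z) ≤ max (V s - V z) 0 + max (-(V s)) 0 := by linarith
            have h2 : (0:ℝ) ≤ max (V s - V z) 0 + max (-(V s)) 0 :=
              add_nonneg (le_max_right _ _) (le_max_right _ _)
            have := max_le h1 h2
            linarith
          have hq : (z - s)⁻¹ * (max (-(V z)) 0 - max (-(V s)) 0)
              ≤ (z - s)⁻¹ * max (V s - V z) 0 :=
            mul_le_mul_of_nonneg_left hineq (inv_nonneg.mpr hzx.le)
          have hslope : d - η < (V z - V s) / (z - s) := by rwa [slope_def_field] at hz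
          rcases max_cases (V s - V z) (0:ℝ) with ⟨he, _⟩ | ⟨he, _⟩
          · have hrw : (z - s)⁻¹ * max (V s - V z) 0 = -((V z - V s) / (z - s)) := by
              rw [he, div_eq_inv_mul]; ring
            rw [hrw] at hq
            linarith
          · rw [he, mul_zero] at hq
            linarith
      have hP0 := hPd s hsT
      have hQ0 := hQd s hsT
      have alg := stmt_3_alg τ₁ c₁ c₂ k (x₁ s) (x₂ s) hτ hc₁ hc₂ hk hk2 hc₂k
      have hbdP : P s ≤ 0 → -(-c₂ * |x₁ s| - k * (-τ₁ * x₁ s + c₁ * x₂ s)) ≤ τ₁ * g s := by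
        intro hPs
        have h := alg.1 (by simpa [hP_def] using hPs)
        have hPmax : max (-(P s)) 0 = -(P s) := max_eq_left (by linarith)
        simp only [hg_def]
        rw [hPmax]
        simp only [hP_def, hQ_def] at h ⊢
        linarith
      have hbdQ : Q s ≤ 0 → -(-c₂ * |x₁ s| + k * (-τ₁ * x₁ s + c₁ * x₂ s)) ≤ τ₁ * g s := by
        intro hQs
        have h := alg.2 (by simpa [hQ_def] using hQs)
        have hQmax : max (-(Q s)) 0 = -(Q s) := max_eq_left (by linarith)
        simp only [hg_def]
        rw [hQmax]
        simp only [hP_def, hQ_def] at h ⊢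
        linarith
      have evP := comp P _ hP0 hbdP
      have evQ := comp Q _ hQ0 hbdQ
      apply Filter.Eventually.frequently
      filter_upwards [evP, evQ] with z h1 h2
      have hsplit : (z - s)⁻¹ * (g z - g s)
          = (z - s)⁻¹ * (max (-(P z)) 0 - max (-(P s)) 0)
            + (z - s)⁻¹ * (max (-(Q z)) 0 - max (-(Q s)) 0) := by
        simp only [hg_def]; ring
      rw [hsplit]
      have hre : r = (τ₁ * g s + η) + (τ₁ * g s + η) := by simp only [hη_def]; ring
      linarith
  -- from g = 0: k * |x₁| ≤ x₂ on [t₀, b]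
  have habs : ∀ b ∈ Ico t₀ T, ∀ t ∈ Icc t₀ b, k * |x₁ t| ≤ x₂ t := by
    intro b hb t ht
    have hgt := main b hb t ht
    simp only [hg_def] at hgt
    have a1 := le_max_right (-(P t)) (0:ℝ)
    have a2 := le_max_right (-(Q t)) (0:ℝ)
    have b1 := le_max_left (-(P t)) (0:ℝ)
    have b2 := le_max_left (-(Q t)) (0:ℝ)
    have hP1 : -(P t) ≤ 0 := by linarith
    have hQ1 : -(Q t) ≤ 0 := by linarith
    simp only [hP_def, hQ_def] at hP1 hQ1
    have h2 : |k * x₁ t| ≤ x₂ t := abs_le.mpr ⟨by linarith, by linarith⟩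
    rwa [abs_mul, abs_of_pos hk] at h2
  -- conclusion
  intro t ht
  have hIcc : t ∈ Icc t₀ t := ⟨ht.1, le_refl t⟩
  refine ⟨?_, by show τ₁ / (2 * c₁) * |x₁ t| ≤ x₂ t; rw [← hk_def]; exact habs t ht t hIcc⟩
  show 0 < x₂ t
  -- positivity of x₂ via monotonicity of x₂ * exp(lam * s)
  obtain ⟨lam, hlam_def⟩ : ∃ lam : ℝ, lam = 2 * c₁ * c₂ / τ₁ := ⟨_, rfl⟩
  have hlam : 0 < lam := by rw [hlam_def]; positivity
  have hlamk : lam * k = c₂ := by rw [hlam_def, hk_def]; field_simp; try ring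
  obtain ⟨h, hh_def⟩ : ∃ h : ℝ → ℝ, h = fun s => x₂ s * Real.exp (lam * s) := ⟨_, rfl⟩
  have hsubt : Icc t₀ t ⊆ Ico t₀ T := fun s hs => ⟨hs.1, lt_of_le_of_lt hs.2 ht.2⟩
  have hderiv : ∀ s ∈ Ico t₀ T,
      HasDerivAt h ((-c₂ * |x₁ s|) * Real.exp (lam * s)
        + x₂ s * (Real.exp (lam * s) * lam)) s := by
    intro s hs
    rw [hh_def]
    have hexp : HasDerivAt (fun u => Real.exp (lam * u)) (Real.exp (lam * s) * lam) s := by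
      simpa using ((hasDerivAt_id s).const_mul lam).exp
    exact (hode s hs).2.mul hexp
  have hmono : MonotoneOn h (Icc t₀ t) := by
    apply monotoneOn_of_deriv_nonneg (convex_Icc t₀ t)
    · intro s hs
      exact (hderiv s (hsubt hs)).continuousAt.continuousWithinAt
    · intro s hs
      rw [interior_Icc] at hs
      exact ((hderiv s (hsubt ⟨hs.1.le, hs.2.le⟩)).differentiableAt).differentiableWithinAt
    · intro s hs
      rw [interior_Icc] at hs
      have hsIcc : s ∈ Icc t₀ t := ⟨hs.1.le, hs.2.le⟩
      rw [(hderiv s (hsubt hsIcc)).deriv]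
      have hxa := habs t ht s hsIcc
      have he := Real.exp_pos (lam * s)
      have hkey : c₂ * |x₁ s| ≤ lam * x₂ s := by
        calc c₂ * |x₁ s| = lam * (k * |x₁ s|) := by rw [← hlamk]; ring
          _ ≤ lam * x₂ s := mul_le_mul_of_nonneg_left hxa hlam.le
      nlinarith
  have hle : h t₀ ≤ h t := hmono ⟨le_refl t₀, ht.1⟩ hIcc ht.1
  simp only [hh_def] at hle
  have he0 := Real.exp_pos (lam * t₀)
  have he1 := Real.exp_pos (lam * t)
  nlinarith
end

section
/- Let τ₁, c₁, c₂ > 0 with c₂ ≤ τ₁²/(4c₁), and let (x₁(t), x₂(t)) be a solution of ẋ₁ = -τ₁x₁ + c₁x₂, ẋ₂ = -c₂|x₁| starting in Ω = {(x₁,x₂) : x₂ ≥ (τ₁/(2c₁))|x₁|, x₂ > 0}. Then the solution is bounded, x₂(t) is nonincreasing and converges to a limit x₂' ≥ 0, and x₁(t) → 0 as t → ∞. -/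
/-!
With `k = τ₁ / (2 c₁)`, the function `V = k |x₁| - x₂` has right derivative at most `(τ₁ / 2) V`
wherever `V ≥ 0`; this is where `c₂ ≤ τ₁² / (4 c₁)` enters. A barrier argument then keeps `V ≤ 0`,
i.e. `Ω` is forward invariant, so `x₂ ≥ k |x₁| ≥ 0`. Since `ẋ₂ = -c₂ |x₁| ≤ 0`, `x₂` decreases to
some `L ≥ 0`. If `L > 0`, then `ẋ₁ ≥ -τ₁ x₁ + c₁ L` pushes `x₁` eventually above `c₁ L / (2 τ₁)`,
and `x₂` would decrease linearly to `-∞`. Hence `L = 0`, and `|x₁| ≤ x₂ / k → 0`.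
-/

open Filter Set Topology Asymptotics

theorem HasDerivAt.hasDerivWithinAt_abs_Ici {u : ℝ → ℝ} {v t : ℝ} (hu : HasDerivAt u v t) :
    HasDerivWithinAt (fun s => |u s|)
      (if u t = 0 then |v| else SignType.sign (u t) * v) (Ici t) t := by
  split_ifs with h
  · rw [hasDerivWithinAt_iff_isLittleO]
    refine IsBigO.trans_isLittleO (IsBigO.of_bound' ?_)
      (hasDerivWithinAt_iff_isLittleO.1 (hu.hasDerivWithinAt (s := Ici t)))
    filter_upwards [self_mem_nhdsWithin] with s (hs : t ≤ s)
    have : (s - t) • |v| = |(s - t) • v| := by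
      rw [smul_eq_mul, smul_eq_mul, abs_mul, abs_of_nonneg (sub_nonneg.2 hs)]
    simp only [h, abs_zero, sub_zero, this, Real.norm_eq_abs]
    exact abs_abs_sub_abs_le_abs_sub _ _
  · exact ((hasDerivAt_abs h).comp t hu).hasDerivWithinAt

theorem nonpos_of_deriv_right_le_mul_self_of_nonneg {f f' : ℝ → ℝ} {a b K : ℝ}
    (hf : ContinuousOn f (Icc a b)) (hf' : ∀ x ∈ Ico a b, HasDerivWithinAt f (f' x) (Ici x) x)
    (ha : f a ≤ 0) (bound : ∀ x ∈ Ico a b, 0 ≤ f x → f' x ≤ K * f x) :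
    ∀ x ∈ Icc a b, f x ≤ 0 := by
  intro x hx
  -- at a contact point with the barrier, `f' ≤ K f < (K + 1) f`, the barrier's slope
  have barrier : ∀ ε > 0, f x ≤ ε * Real.exp ((K + 1) * (x - a)) := by
    intro ε hε
    refine image_le_of_deriv_right_lt_deriv_boundary
      (B := fun t => ε * Real.exp ((K + 1) * (t - a)))
      (B' := fun t => ε * (Real.exp ((K + 1) * (t - a)) * ((K + 1) * 1)))
      hf hf' (by simpa using ha.trans hε.le) (fun t => ?_) (fun t ht hft => ?_) hx
    · exact (((hasDerivAt_id t).sub_const a).const_mul (K + 1)).exp.const_mul ε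
    · have hpos : 0 < ε * Real.exp ((K + 1) * (t - a)) := by positivity
      have := bound t ht (hft ▸ hpos.le)
      rw [hft] at this
      linarith
  refine le_of_forall_pos_le_add fun δ hδ => ?_
  have hE := Real.exp_pos ((K + 1) * (x - a))
  simpa [div_mul_cancel₀ _ hE.ne'] using barrier (δ / Real.exp ((K + 1) * (x - a))) (by positivity)

theorem eventually_lt_of_deriv_le_neg_mul_self {f f' : ℝ → ℝ} {a τ ε : ℝ} (hτ : 0 < τ)
    (hε : 0 < ε) (hf : ∀ t, a ≤ t → HasDerivAt f (f' t) t)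
    (bound : ∀ t, a ≤ t → f' t ≤ -τ * f t) : ∀ᶠ t in atTop, f t < ε := by
  have decay : ∀ t, a ≤ t → f t ≤ f a * Real.exp (-τ * (t - a)) := fun t ht => by
    simpa only [gronwallBound_ε0] using le_gronwallBound_of_liminf_deriv_right_le (K := -τ) (ε := 0)
      (fun x hx => (hf x hx.1).continuousAt.continuousWithinAt)
      (fun x hx r hr => (hf x hx.1).hasDerivWithinAt.liminf_right_slope_le hr) le_rfl
      (fun x hx => by linarith [bound x hx.1]) t ⟨ht, le_rfl⟩
  have hlim : Tendsto (fun t => f a * Real.exp (-τ * (t - a))) atTop (𝓝 0) := by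
    have hexp := Real.tendsto_exp_atBot.comp <| (tendsto_atTop_add_const_right atTop (-a)
      tendsto_id).const_mul_atTop_of_neg (neg_lt_zero.2 hτ)
    simpa [← sub_eq_add_neg] using hexp.const_mul (f a)
  filter_upwards [hlim.eventually_lt_const hε, eventually_ge_atTop a] with t hlt ht
  exact (decay t ht).trans_lt hlt

theorem tendsto_atBot_of_deriv_le_neg {f f' : ℝ → ℝ} {a δ : ℝ} (hδ : 0 < δ)
    (hf : ∀ t, a ≤ t → HasDerivAt f (f' t) t) (bound : ∀ t, a ≤ t → f' t ≤ -δ) :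
    Tendsto f atTop atBot := by
  have linear : ∀ t, a ≤ t → f t ≤ f a + -δ * (t - a) := fun t ht =>
    image_le_of_deriv_right_le_deriv_boundary (B := fun t => f a + -δ * (t - a))
      (fun x hx => (hf x hx.1).continuousAt.continuousWithinAt)
      (fun x hx => (hf x hx.1).hasDerivWithinAt) (by simp) (by fun_prop)
      (fun x _ =>
        ((((hasDerivAt_id x).sub_const a).const_mul (-δ)).const_add (f a)).hasDerivWithinAt)
      (fun x hx => by simpa using bound x hx.1) ⟨ht, le_rfl⟩
  exact tendsto_atBot_mono' atTop ((eventually_ge_atTop a).mono linear) <|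
    tendsto_atBot_add_const_left _ _ <| (tendsto_atTop_add_const_right atTop (-a)
      tendsto_id).const_mul_atTop_of_neg (neg_lt_zero.2 hδ)

theorem AntitoneOn.exists_tendsto_of_ge {f : ℝ → ℝ} {a m : ℝ} (hf : AntitoneOn f (Ici a))
    (hm : ∀ t, a ≤ t → m ≤ f t) :
    ∃ L, m ≤ L ∧ Tendsto f atTop (𝓝 L) ∧ ∀ t, a ≤ t → L ≤ f t := by
  set g : ℝ → ℝ := fun t => f (max t a)
  have hg : Antitone g := fun s t hst =>
    hf (le_max_right s a) (le_max_right t a) (max_le_max_right a hst)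
  have hbdd : BddBelow (range g) := ⟨m, by rintro _ ⟨t, rfl⟩; exact hm _ (le_max_right t a)⟩
  have hlim : Tendsto f atTop (𝓝 (⨅ t, g t)) :=
    (tendsto_atTop_ciInf hg hbdd).congr' <|
      (eventually_ge_atTop a).mono fun t ht => by simp [g, max_eq_left ht]
  refine ⟨⨅ t, g t, le_ciInf fun t => hm _ (le_max_right t a), hlim, fun t ht => ?_⟩
  simpa [g, max_eq_left ht] using ciInf_le hbdd t

def IsSolution (τ₁ c₁ c₂ t₀ : ℝ) (x₁ x₂ : ℝ → ℝ) : Prop :=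
  ∀ t, t₀ ≤ t → HasDerivAt x₁ (-τ₁ * x₁ t + c₁ * x₂ t) t ∧ HasDerivAt x₂ (-c₂ * |x₁ t|) t

namespace IsSolution

variable {τ₁ c₁ c₂ t₀ : ℝ} {x₁ x₂ : ℝ → ℝ}

theorem antitoneOn_snd (h : IsSolution τ₁ c₁ c₂ t₀ x₁ x₂) (hc₂ : 0 ≤ c₂) :
    AntitoneOn x₂ (Ici t₀) := by
  refine antitoneOn_of_hasDerivWithinAt_nonpos (f' := fun t => -c₂ * |x₁ t|) (convex_Ici t₀)
    (fun t ht => (h t ht).2.continuousAt.continuousWithinAt) (fun t ht => ?_) (fun t _ => ?_)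
  · rw [interior_Ici] at ht
    exact (h t (le_of_lt ht)).2.hasDerivWithinAt
  · exact mul_nonpos_of_nonpos_of_nonneg (neg_nonpos.2 hc₂) (abs_nonneg _)

theorem mul_abs_fst_le_snd (h : IsSolution τ₁ c₁ c₂ t₀ x₁ x₂) (hτ : 0 < τ₁) (hc₁ : 0 < c₁)
    (hcond : c₂ ≤ τ₁ ^ 2 / (4 * c₁)) (h₀ : τ₁ / (2 * c₁) * |x₁ t₀| ≤ x₂ t₀) :
    ∀ t, t₀ ≤ t → τ₁ / (2 * c₁) * |x₁ t| ≤ x₂ t := by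
  have hkc : τ₁ / (2 * c₁) * c₁ = τ₁ / 2 := by field_simp
  have hc₂k : c₂ ≤ τ₁ / (2 * c₁) * τ₁ / 2 := hcond.trans_eq (by field_simp; ring)
  have hk : 0 < τ₁ / (2 * c₁) := by positivity
  set k := τ₁ / (2 * c₁)
  set d : ℝ → ℝ := fun t => -τ₁ * x₁ t + c₁ * x₂ t
  intro T hT
  suffices k * |x₁ T| - x₂ T ≤ 0 by linarith
  refine nonpos_of_deriv_right_le_mul_self_of_nonneg (K := τ₁ / 2) (f := fun t => k * |x₁ t| - x₂ t)
    (f' := fun t => k * (if x₁ t = 0 then |d t| else SignType.sign (x₁ t) * d t) - -c₂ * |x₁ t|)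
    (fun t ht => (((h t ht.1).1.continuousAt.abs.const_mul k).sub
      (h t ht.1).2.continuousAt).continuousWithinAt)
    (fun t ht => ((h t ht.1).1.hasDerivWithinAt_abs_Ici.const_mul k).sub
      (h t ht.1).2.hasDerivWithinAt)
    (by linarith) (fun t _ hV => ?_) T ⟨hT, le_rfl⟩
  have hkc₂ : k * (c₁ * x₂ t) = τ₁ / 2 * x₂ t := by rw [← mul_assoc, hkc]
  simp only [d]
  rcases lt_trichotomy (x₁ t) 0 with hx | hx | hx
  · simp only [hx.ne, if_false, sign_neg hx, SignType.coe_neg_one, abs_of_neg hx] at hV ⊢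
    nlinarith [mul_le_mul_of_nonneg_right hc₂k (neg_nonneg.2 hx.le),
      mul_pos hτ (mul_pos hk (neg_pos.2 hx))]
  · simp only [hx, if_true, abs_zero, mul_zero, sub_zero, zero_add] at hV ⊢
    rw [abs_mul, abs_of_pos hc₁, abs_of_nonpos (by linarith), ← mul_assoc, hkc]
    linarith
  · simp only [hx.ne', if_false, sign_pos hx, SignType.coe_one, abs_of_pos hx] at hV ⊢
    nlinarith [mul_le_mul_of_nonneg_right hc₂k hx.le, mul_nonneg hτ.le hV]

theorem eventually_le_fst (h : IsSolution τ₁ c₁ c₂ t₀ x₁ x₂) (hτ : 0 < τ₁) (hc₁ : 0 ≤ c₁) {L : ℝ}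
    (hL : ∀ t, t₀ ≤ t → L ≤ x₂ t) {β : ℝ} (hβ : β < c₁ * L / τ₁) :
    ∀ᶠ t in atTop, β ≤ x₁ t := by
  have hτL : τ₁ * (c₁ * L / τ₁) = c₁ * L := by field_simp
  filter_upwards [eventually_lt_of_deriv_le_neg_mul_self hτ (sub_pos.2 hβ)
    (fun t ht => (h t ht).1.const_sub (c₁ * L / τ₁))
    (fun t ht => by nlinarith [mul_le_mul_of_nonneg_left (hL t ht) hc₁])] with t ht
  linarith

theorem nonpos_of_tendsto_snd (h : IsSolution τ₁ c₁ c₂ t₀ x₁ x₂) (hτ : 0 < τ₁) (hc₁ : 0 < c₁)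
    (hc₂ : 0 < c₂) {L : ℝ} (hlim : Tendsto x₂ atTop (𝓝 L)) (hL : ∀ t, t₀ ≤ t → L ≤ x₂ t) :
    L ≤ 0 := by
  refine not_lt.1 fun hLpos => not_tendsto_atBot_of_tendsto_nhds hlim ?_
  have hβ : 0 < c₁ * L / (2 * τ₁) := by positivity
  have hβL : c₁ * L / (2 * τ₁) < c₁ * L / τ₁ := by
    rw [mul_comm 2, ← div_div]; exact half_lt_self (by positivity)
  obtain ⟨T, hT⟩ := eventually_atTop.1
    ((h.eventually_le_fst hτ hc₁.le hL hβL).and (eventually_ge_atTop t₀))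
  refine tendsto_atBot_of_deriv_le_neg (mul_pos hc₂ hβ) (fun t ht => (h t (hT t ht).2).2)
    (fun t ht => ?_)
  have := (hT t ht).1
  nlinarith [le_abs_self (x₁ t)]

end IsSolution

theorem stmt_4 (τ₁ c₁ c₂ : ℝ) (hτ : 0 < τ₁) (hc₁ : 0 < c₁) (hc₂ : 0 < c₂)
    (hcond : c₂ ≤ τ₁ ^ 2 / (4 * c₁))
    (t₀ : ℝ) (x₁ x₂ : ℝ → ℝ)
    (hode : ∀ t, t₀ ≤ t →
      HasDerivAt x₁ (-τ₁ * x₁ t + c₁ * x₂ t) t ∧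
      HasDerivAt x₂ (-c₂ * |x₁ t|) t)
    (hinit : 0 < x₂ t₀ ∧ τ₁ / (2 * c₁) * |x₁ t₀| ≤ x₂ t₀) :
    (∃ M : ℝ, ∀ t, t₀ ≤ t → |x₁ t| ≤ M ∧ |x₂ t| ≤ M) ∧
    AntitoneOn x₂ (Set.Ici t₀) ∧
    (∃ L : ℝ, 0 ≤ L ∧ Filter.Tendsto x₂ Filter.atTop (nhds L)) ∧
    Filter.Tendsto x₁ Filter.atTop (nhds 0) := by
  have hsol : IsSolution τ₁ c₁ c₂ t₀ x₁ x₂ := hode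
  have hk : 0 < τ₁ / (2 * c₁) := by positivity
  have habs : ∀ t, t₀ ≤ t → |x₁ t| ≤ x₂ t / (τ₁ / (2 * c₁)) := fun t ht =>
    (le_div_iff₀' hk).2 (hsol.mul_abs_fst_le_snd hτ hc₁ hcond hinit.2 t ht)
  have hnonneg : ∀ t, t₀ ≤ t → 0 ≤ x₂ t := fun t ht =>
    (mul_nonneg hk.le (abs_nonneg _)).trans (hsol.mul_abs_fst_le_snd hτ hc₁ hcond hinit.2 t ht)
  have hanti := hsol.antitoneOn_snd hc₂.le
  obtain ⟨L, hL₀, hlim, hL⟩ := hanti.exists_tendsto_of_ge hnonneg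
  have hL0 : L = 0 := le_antisymm (hsol.nonpos_of_tendsto_snd hτ hc₁ hc₂ hlim hL) hL₀
  refine ⟨⟨x₂ t₀ / (τ₁ / (2 * c₁)) + x₂ t₀, fun t ht => ⟨?_, ?_⟩⟩, hanti, ⟨L, hL₀, hlim⟩, ?_⟩
  · have := div_le_div_of_nonneg_right (hanti self_mem_Ici ht ht) hk.le
    linarith [habs t ht, hnonneg t₀ le_rfl]
  · rw [abs_of_nonneg (hnonneg t ht)]
    linarith [hanti self_mem_Ici ht ht, div_nonneg (hnonneg t₀ le_rfl) hk.le]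
  · refine squeeze_zero_norm' ((eventually_ge_atTop t₀).mono habs) ?_
    simpa [hL0] using hlim.div_const (τ₁ / (2 * c₁))
end

section
/- Consider the planar system ẋ = -αx + βλ·sign(x)·min(|x|,1), λ̇ = g(x,λ) where g is continuous, g ≤ 0, and g(x,λ) ≥ -γ(x² + λ²), with α, β, γ > 0. Suppose k ∈ (0, α/β) and a = [(kα/2 - k²β/2)/(γ(1+k²))]² > 0. Then the set Ω_a = {(x,λ) : 0 ≤ λ ≤ k√a, λ ≥ k|x|, x² ≤ a} is forward invariant. -/
open Set Filter Topology

/-!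
Each defining inequality of `Ω_a` is written as `f ≤ 0` and propagated by a barrier
argument: if `f t₀ ≤ 0` and `f' ≤ C f` wherever `f` is small and positive, then comparing `f`
with `ε e^{K (t - t₀)}` and letting `ε → 0` keeps `f ≤ 0`. For `λ - λ(t₀)` this is `g ≤ 0`; for
`|x| - √a` it follows from `λ ≤ k √a` and `k β < α`. For the cone gap `k |x| - λ`, the lower
bound on `g` together with the choice of `a`, which makes `γ (1 + k²) x² ≤ k (α - k β) |x| / 2`
on `|x| ≤ √a`, bounds the derivative by `γ (k |x| - λ)²`.
-/

theorem image_nonpos_of_deriv_right_le_mul {f f' : ℝ → ℝ} {a b C η : ℝ} (hη : 0 < η)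
    (hf : ContinuousOn f (Icc a b)) (hf' : ∀ t ∈ Ico a b, HasDerivWithinAt f (f' t) (Ici t) t)
    (ha : f a ≤ 0) (bound : ∀ t ∈ Ico a b, 0 < f t → f t < η → f' t ≤ C * f t) :
    ∀ ⦃t⦄, t ∈ Icc a b → f t ≤ 0 := by
  intro t ht
  set K := |C| + 1
  have hCK : C < K := (le_abs_self C).trans_lt (lt_add_one _)
  -- A contact with the barrier `ε e^{K (s - a)}` happens below `η`, where `f' ≤ C f < K f`.
  have below_barrier : ∀ ε ∈ Ioo 0 (η / Real.exp (K * (b - a))),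
      f t ≤ ε * Real.exp (K * (t - a)) := by
    rintro ε ⟨hε0, hεη⟩
    have hB (s : ℝ) : HasDerivAt (fun s ↦ ε * Real.exp (K * (s - a)))
        (K * (ε * Real.exp (K * (s - a)))) s :=
      ((((hasDerivAt_id s).sub_const a).const_mul K).exp.const_mul ε).congr_deriv
        (by simp only [id_eq, mul_one]; ring)
    refine image_le_of_deriv_right_lt_deriv_boundary' (B := fun s ↦ ε * Real.exp (K * (s - a)))
      hf hf' (by simpa using ha.trans hε0.le) (by fun_prop) (fun s _ ↦ (hB s).hasDerivWithinAt)
      (fun s hs hfs ↦ ?_) ht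
    have hpos : 0 < f s := hfs ▸ by positivity
    have hlt : f s < η := by
      rw [lt_div_iff₀ (Real.exp_pos _)] at hεη
      calc f s ≤ ε * Real.exp (K * (b - a)) := by rw [hfs]; gcongr; exact hs.2.le
        _ < η := hεη
    calc f' s ≤ C * f s := bound s hs hpos hlt
      _ < K * f s := by gcongr
      _ = _ := by rw [hfs]
  have hlim : Tendsto (fun ε ↦ ε * Real.exp (K * (t - a))) (𝓝[>] 0) (𝓝 0) :=
    ((continuous_id.mul_const _).tendsto' 0 0 (zero_mul _)).mono_left nhdsWithin_le_nhds
  exact ge_of_tendsto hlim (eventually_of_mem (Ioo_mem_nhdsGT (by positivity)) below_barrier)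

theorem nonpos_of_hasDerivAt_le_mul {f f' : ℝ → ℝ} {a b C η : ℝ} (hη : 0 < η)
    (hf : ∀ t ∈ Ico a b, HasDerivAt f (f' t) t) (ha : f a ≤ 0)
    (bound : ∀ t ∈ Ico a b, 0 < f t → f t < η → f' t ≤ C * f t) :
    ∀ t ∈ Ico a b, f t ≤ 0 := by
  intro t ⟨hat, htb⟩
  have hsub : Icc a t ⊆ Ico a b := Icc_subset_Ico_right htb
  exact image_nonpos_of_deriv_right_le_mul hη
    (fun s hs ↦ (hf s (hsub hs)).continuousAt.continuousWithinAt)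
    (fun s hs ↦ (hf s (hsub (Ico_subset_Icc_self hs))).hasDerivWithinAt) ha
    (fun s hs ↦ bound s (hsub (Ico_subset_Icc_self hs))) ⟨hat, le_rfl⟩

theorem Real.sign_mul_self_eq_abs (r : ℝ) : Real.sign r * r = |r| := by
  rcases lt_trichotomy r 0 with h | rfl | h
  · rw [Real.sign_of_neg h, abs_of_neg h, neg_one_mul]
  · simp
  · rw [Real.sign_of_pos h, abs_of_pos h, one_mul]

theorem HasDerivAt.abs_of_deriv_eq_zero {f : ℝ → ℝ} {f' t : ℝ} (hf : HasDerivAt f f' t)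
    (h₀ : f t = 0 → f' = 0) : HasDerivAt (fun s ↦ |f s|) (Real.sign (f t) * f') t := by
  rcases lt_trichotomy (f t) 0 with h | h | h
  · rw [Real.sign_of_neg h]; exact (hasDerivAt_abs_neg h).comp t hf
  · rw [h₀ h, mul_zero]
    rw [hasDerivAt_iff_isLittleO, h₀ h] at hf
    rw [hasDerivAt_iff_isLittleO]
    simpa [h] using hf.norm_left
  · rw [Real.sign_of_pos h]; exact (hasDerivAt_abs_pos h).comp t hf

theorem sign_mul_saturated_field_le {α β L x l : ℝ} (hβ : 0 ≤ β) (hL : 0 ≤ L) (hl : l ≤ L) :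
    Real.sign x * (-α * x + β * l * Real.sign x * min |x| 1) ≤ -α * |x| + β * L := by
  set c := Real.sign x * Real.sign x * min |x| 1
  have hm0 : 0 ≤ min |x| 1 := le_min (abs_nonneg x) zero_le_one
  have hss : Real.sign x * Real.sign x ≤ 1 := by
    rcases Real.sign_apply_eq x with h | h | h <;> rw [h] <;> norm_num
  have hc0 : 0 ≤ c := mul_nonneg (mul_self_nonneg _) hm0
  have hc1 : c ≤ 1 := mul_le_one₀ hss hm0 (min_le_right _ _)
  have hlc : l * c ≤ L := by
    rcases le_or_gt l 0 with h | h
    · exact (mul_nonpos_of_nonpos_of_nonneg h hc0).trans hL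
    · exact (mul_le_of_le_one_right h.le hc1).trans hl
  calc Real.sign x * (-α * x + β * l * Real.sign x * min |x| 1)
      = -α * (Real.sign x * x) + β * (l * c) := by ring
    _ ≤ -α * |x| + β * L := by rw [Real.sign_mul_self_eq_abs]; gcongr

theorem sign_mul_saturated_field_nonpos {α β k A x l : ℝ} (hβ : 0 ≤ β) (hk : 0 ≤ k)
    (hkβ : k * β < α) (hA : 0 ≤ A) (hxA : A ≤ |x|) (hl : l ≤ k * A) :
    Real.sign x * (-α * x + β * l * Real.sign x * min |x| 1) ≤ 0 := by
  have hα : 0 ≤ α := (mul_nonneg hk hβ).trans hkβ.le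
  calc _ ≤ -α * |x| + β * (k * A) := sign_mul_saturated_field_le hβ (mul_nonneg hk hA) hl
    _ ≤ -(α - k * β) * A := by nlinarith [mul_le_mul_of_nonneg_left hxA hα]
    _ ≤ 0 := by nlinarith

theorem cone_gap_deriv_le {α β γ k A u l D G : ℝ} (hγ : 0 ≤ γ) (hk : 0 ≤ k)
    (hA : γ * (1 + k ^ 2) * A = k * (α - k * β) / 2) (hu : 0 ≤ u) (huA : u ≤ A)
    (hgap : 0 < k * u - l) (hgap1 : k * u - l < 1)
    (hD : D ≤ -α * u + β * (k * u)) (hG : -γ * (u ^ 2 + l ^ 2) ≤ G) :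
    k * D - G ≤ γ * (k * u - l) := by
  set E := k * u - l
  have hl : l ^ 2 ≤ k ^ 2 * u ^ 2 + E ^ 2 := by
    have : l ^ 2 = k ^ 2 * u ^ 2 + E ^ 2 - 2 * (k * u) * E := by ring
    nlinarith [mul_nonneg (mul_nonneg hk hu) hgap.le]
  have hu2 : γ * (1 + k ^ 2) * u ^ 2 ≤ γ * (1 + k ^ 2) * A * u := by
    rw [mul_assoc _ A]; gcongr; nlinarith
  have hE2 : γ * E ^ 2 ≤ γ * E := by gcongr; nlinarith
  have hAu : 0 ≤ γ * (1 + k ^ 2) * A * u := by have := hu.trans huA; positivity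
  calc k * D - G ≤ -k * (α - k * β) * u + γ * (u ^ 2 + l ^ 2) := by nlinarith
    _ ≤ -k * (α - k * β) * u + γ * (1 + k ^ 2) * u ^ 2 + γ * E ^ 2 := by nlinarith
    _ ≤ -(γ * (1 + k ^ 2) * A * u) + γ * E := by rw [hA] at hu2 hAu ⊢; linarith
    _ ≤ γ * E := by linarith

theorem stmt_12_general (α β γ k : ℝ) (hβ : 0 < β) (hγ : 0 < γ)
    (hk : 0 < k) (hk' : k < α / β)
    (a : ℝ) (ha : a = ((k * α / 2 - k ^ 2 * β / 2) / (γ * (1 + k ^ 2))) ^ 2)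
    (g : ℝ → ℝ → ℝ)
    (hgle : ∀ x lam, g x lam ≤ 0)
    (hgge : ∀ x lam, -γ * (x ^ 2 + lam ^ 2) ≤ g x lam)
    (Ωa : Set (ℝ × ℝ))
    (hΩa : Ωa = {p : ℝ × ℝ | 0 ≤ p.2 ∧ p.2 ≤ k * Real.sqrt a ∧
      k * |p.1| ≤ p.2 ∧ p.1 ^ 2 ≤ a})
    (t₀ T : ℝ) (x lam : ℝ → ℝ)
    (hode : ∀ t ∈ Set.Ico t₀ T,
      HasDerivAt x (-α * x t + β * lam t * Real.sign (x t) * min |x t| 1) t ∧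
      HasDerivAt lam (g (x t) (lam t)) t)
    (hinit : (x t₀, lam t₀) ∈ Ωa) :
    ∀ t ∈ Set.Ico t₀ T, (x t, lam t) ∈ Ωa := by
  have hkβ : k * β < α := (lt_div_iff₀ hβ).1 hk'
  set A := (k * α / 2 - k ^ 2 * β / 2) / (γ * (1 + k ^ 2)) with hA
  have hA0 : 0 < A := div_pos (by nlinarith) (by positivity)
  have hAγ : γ * (1 + k ^ 2) * A = k * (α - k * β) / 2 := by
    rw [hA]; field_simp
  subst ha hΩa
  simp only [Set.mem_ofPred_eq, Real.sqrt_sq hA0.le, sq_le_sq, abs_of_pos hA0] at hinit ⊢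
  obtain ⟨-, hlam₀, hcone₀, hx₀⟩ := hinit
  have hlam : ∀ t ∈ Ico t₀ T, lam t - lam t₀ ≤ 0 :=
    nonpos_of_hasDerivAt_le_mul one_pos (fun t ht ↦ (hode t ht).2.sub_const _) (by simp)
      (C := 0) fun t _ _ _ ↦ by simpa using hgle _ _
  have habs : ∀ t ∈ Ico t₀ T, HasDerivAt (fun s ↦ |x s|)
      (Real.sign (x t) * (-α * x t + β * lam t * Real.sign (x t) * min |x t| 1)) t :=
    fun t ht ↦ (hode t ht).1.abs_of_deriv_eq_zero fun h ↦ by simp [h]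
  have hx : ∀ t ∈ Ico t₀ T, |x t| - A ≤ 0 := by
    refine nonpos_of_hasDerivAt_le_mul one_pos (fun t ht ↦ (habs t ht).sub_const A)
      (by linarith) (C := 0) fun t ht hpos _ ↦ ?_
    rw [zero_mul]
    exact sign_mul_saturated_field_nonpos hβ.le hk.le hkβ hA0.le (by linarith)
      (by linarith [hlam t ht])
  have hcone : ∀ t ∈ Ico t₀ T, k * |x t| - lam t ≤ 0 := by
    refine nonpos_of_hasDerivAt_le_mul one_pos
      (fun t ht ↦ ((habs t ht).const_mul k).sub (hode t ht).2) (by linarith)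
      fun t ht hpos hlt ↦ cone_gap_deriv_le hγ.le hk.le hAγ (abs_nonneg _)
        (by linarith [hx t ht]) hpos hlt
        (sign_mul_saturated_field_le hβ.le (by positivity) (by linarith))
        (by simpa only [sq_abs] using hgge (x t) (lam t))
  intro t ht
  have := hlam t ht
  have := hx t ht
  have := hcone t ht
  have : 0 ≤ k * |x t| := by positivity
  exact ⟨by linarith, by linarith, by linarith, by linarith⟩

theorem stmt_12 (α β γ k : ℝ) (hα : 0 < α) (hβ : 0 < β) (hγ : 0 < γ)
    (hk : 0 < k) (hk' : k < α / β)
    (a : ℝ) (ha : a = ((k * α / 2 - k ^ 2 * β / 2) / (γ * (1 + k ^ 2))) ^ 2)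
    (hapos : 0 < a)
    (g : ℝ → ℝ → ℝ) (hgcont : Continuous fun p : ℝ × ℝ => g p.1 p.2)
    (hgle : ∀ x lam, g x lam ≤ 0)
    (hgge : ∀ x lam, -γ * (x ^ 2 + lam ^ 2) ≤ g x lam)
    (Ωa : Set (ℝ × ℝ))
    (hΩa : Ωa = {p : ℝ × ℝ | 0 ≤ p.2 ∧ p.2 ≤ k * Real.sqrt a ∧
      k * |p.1| ≤ p.2 ∧ p.1 ^ 2 ≤ a})
    (t₀ T : ℝ) (x lam : ℝ → ℝ)
    (hode : ∀ t ∈ Set.Ico t₀ T,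
      HasDerivAt x (-α * x t + β * lam t * Real.sign (x t) * min |x t| 1) t ∧
      HasDerivAt lam (g (x t) (lam t)) t)
    (hinit : (x t₀, lam t₀) ∈ Ωa) :
    ∀ t ∈ Set.Ico t₀ T, (x t, lam t) ∈ Ωa :=
  stmt_12_general α β γ k hβ hγ hk hk' a ha g hgle hgge Ωa hΩa t₀ T x lam hode hinit
end

section
/- Let P, Q, Γ be symmetric positive definite matrices, A a matrix with PA + AᵀP ≤ -Q, and Pb = C. Consider V(x₁,x₂,λ) = x₁ᵀPx₁ + x₂ᵀΓ⁻¹x₂ + (D_v/γ)λ² along solutions of system (11): ẋ₁ = Ax₁ + bφ(t)ᵀx₂ + b·v(t,λ), ẋ₂ = -Γφ(t)Cᵀx₁, λ̇ = -γ|Cᵀx₁|, where |v(t,λ)| ≤ D_v·λ for all t and all λ ≥ 0, and λ(t) ≥ 0 along the solution. Then along any such solution, dV/dt ≤ -x₁ᵀQx₁. -/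
/-!
Along solutions, `dV/dt = 2 ẋ₁ᵀ P x₁ + 2 ẋ₂ᵀ Γ⁻¹ x₂ + 2 (D_v/γ) λ λ̇`. Since `Pb = C` and `Γ` is
symmetric, the two cross terms `±2 (φᵀx₂)(Cᵀx₁)` cancel; the Lyapunov inequality bounds
`2 (Ax₁)ᵀ P x₁` by `-x₁ᵀQx₁`; and the disturbance term `2 v (Cᵀx₁)` is dominated by the decay
`-2 D_v λ |Cᵀx₁|` of the adaptive term because `|v| ≤ D_v λ`.
-/

open Matrix

section Calculus

variable {ι : Type*} [Fintype ι] {f g : ℝ → ι → ℝ} {f' g' : ι → ℝ} {t : ℝ}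

theorem HasDerivAt.dotProduct (hf : HasDerivAt f f' t) (hg : HasDerivAt g g' t) :
    HasDerivAt (fun s => f s ⬝ᵥ g s) (f' ⬝ᵥ g t + f t ⬝ᵥ g') t := by
  have hterm (i : ι) : HasDerivAt (fun s => f s i * g s i) (f' i * g t i + f t i * g' i) t :=
    (hasDerivAt_pi.1 hf i).mul (hasDerivAt_pi.1 hg i)
  have := HasDerivAt.fun_sum fun i (_ : i ∈ Finset.univ) => hterm i
  simpa [_root_.dotProduct, Finset.sum_add_distrib] using this

theorem HasDerivAt.mulVec {κ : Type*} (M : Matrix κ ι ℝ) (hf : HasDerivAt f f' t) :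
    HasDerivAt (fun s => M *ᵥ f s) (M *ᵥ f') t :=
  hasDerivAt_pi.2 fun i => by
    simpa [Matrix.mulVec] using (hasDerivAt_const t (M i)).dotProduct hf

theorem Matrix.IsSymm.dotProduct_mulVec_comm {R : Type*} [CommSemiring R] {M : Matrix ι ι R}
    (hM : M.IsSymm) (x y : ι → R) : x ⬝ᵥ M *ᵥ y = y ⬝ᵥ M *ᵥ x := by
  rw [dotProduct_mulVec, ← mulVec_transpose, hM.eq, dotProduct_comm]

theorem HasDerivAt.dotProduct_mulVec_self {M : Matrix ι ι ℝ} (hM : M.IsSymm)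
    (hf : HasDerivAt f f' t) :
    HasDerivAt (fun s => f s ⬝ᵥ M *ᵥ f s) (2 * (f' ⬝ᵥ M *ᵥ f t)) t := by
  convert hf.dotProduct (hf.mulVec M) using 1
  rw [hM.dotProduct_mulVec_comm (f t)]
  ring

end Calculus

theorem Matrix.IsSymm.mulVec_dotProduct_inv_mulVec {ι R : Type*} [Fintype ι] [DecidableEq ι]
    [CommRing R] {M : Matrix ι ι R} (hM : M.IsSymm) (h : IsUnit M.det) (u w : ι → R) :
    M *ᵥ u ⬝ᵥ M⁻¹ *ᵥ w = u ⬝ᵥ w := by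
  rw [dotProduct_mulVec, ← hM.eq, mulVec_transpose, hM.eq, vecMul_vecMul,
    mul_nonsing_inv M h, vecMul_one]

theorem two_mul_mulVec_dotProduct_le_of_lyapunov {ι R : Type*} [Fintype ι] [CommRing R]
    [PartialOrder R] [IsOrderedRing R] [StarRing R] [TrivialStar R]
    {P A Q : Matrix ι ι R} (hP : P.IsSymm) (hLyap : (-(P * A + Aᵀ * P + Q)).PosSemidef)
    (x : ι → R) : 2 * (A *ᵥ x ⬝ᵥ P *ᵥ x) ≤ -(x ⬝ᵥ Q *ᵥ x) := by
  have h := hLyap.dotProduct_mulVec_nonneg x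
  simp only [star_trivial, neg_mulVec, add_mulVec, ← mulVec_mulVec, dotProduct_neg,
    dotProduct_add, dotProduct_mulVec x Aᵀ, vecMul_transpose] at h
  rw [hP.dotProduct_mulVec_comm x] at h
  rw [two_mul, le_neg_iff_add_nonpos_right]
  exact neg_nonneg.mp h

theorem stmt_14_general (k m : ℕ)
    (P Q : Matrix (Fin k) (Fin k) ℝ) (Γ : Matrix (Fin m) (Fin m) ℝ)
    (A : Matrix (Fin k) (Fin k) ℝ) (b C : Fin k → ℝ)
    (hP : P.PosDef) (hΓ : Γ.PosDef)
    (hLyap : (-(P * A + Aᵀ * P + Q)).PosSemidef)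
    (hPb : P.mulVec b = C)
    (γ Dv : ℝ) (hγ : 0 < γ)
    (φ : ℝ → Fin m → ℝ)
    (v : ℝ → ℝ → ℝ)
    (hvbound : ∀ t lam, 0 ≤ lam → |v t lam| ≤ Dv * lam)
    (x₁ : ℝ → Fin k → ℝ) (x₂ : ℝ → Fin m → ℝ) (lam : ℝ → ℝ)
    (hlam : ∀ t, 0 ≤ lam t)
    (hode : ∀ t : ℝ,
      HasDerivAt x₁ (A.mulVec (x₁ t) + (φ t ⬝ᵥ x₂ t) • b + v t (lam t) • b) t ∧
      HasDerivAt x₂ (-((C ⬝ᵥ x₁ t) • Γ.mulVec (φ t))) t ∧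
      HasDerivAt lam (-γ * |C ⬝ᵥ x₁ t|) t)
    (V : ℝ → ℝ)
    (hV : ∀ t, V t = x₁ t ⬝ᵥ P.mulVec (x₁ t) + x₂ t ⬝ᵥ Γ⁻¹.mulVec (x₂ t) +
      (Dv / γ) * (lam t) ^ 2) :
    ∀ t : ℝ, ∃ d : ℝ, HasDerivAt V d t ∧ d ≤ -(x₁ t ⬝ᵥ Q.mulVec (x₁ t)) := by
  intro t
  obtain ⟨hx₁, hx₂, hlam'⟩ := hode t
  have hPsymm : P.IsSymm := isHermitian_iff_isSymm.mp hP.isHermitian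
  have hΓsymm : Γ.IsSymm := isHermitian_iff_isSymm.mp hΓ.isHermitian
  set c := C ⬝ᵥ x₁ t
  have hlamsq :
      HasDerivAt (fun s => Dv / γ * lam s ^ 2) (Dv / γ * (2 * lam t * (-γ * |c|))) t := by
    simpa using (hlam'.fun_pow 2).const_mul (Dv / γ)
  have hlamsq_eq : Dv / γ * (2 * lam t * (-γ * |c|)) = -(2 * (Dv * lam t * |c|)) := by
    field_simp
  rw [funext hV]
  refine ⟨_, ((hx₁.dotProduct_mulVec_self hPsymm).fun_add
    (hx₂.dotProduct_mulVec_self hΓsymm.inv)).fun_add hlamsq, ?_⟩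
  have hb : b ⬝ᵥ P *ᵥ x₁ t = c := by rw [hPsymm.dotProduct_mulVec_comm, hPb, dotProduct_comm]
  have hΓφ : Γ *ᵥ φ t ⬝ᵥ Γ⁻¹ *ᵥ x₂ t = φ t ⬝ᵥ x₂ t :=
    hΓsymm.mulVec_dotProduct_inv_mulVec ((isUnit_iff_isUnit_det Γ).mp hΓ.isUnit) _ _
  have hv : v t (lam t) * c ≤ Dv * lam t * |c| :=
    (le_abs_self _).trans ((abs_mul _ _).trans_le
      (mul_le_mul_of_nonneg_right (hvbound t _ (hlam t)) (abs_nonneg c)))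
  simp only [add_dotProduct, smul_dotProduct, neg_dotProduct, hb, hΓφ, smul_eq_mul, hlamsq_eq]
  linarith [two_mul_mulVec_dotProduct_le_of_lyapunov hPsymm hLyap (x₁ t)]

theorem stmt_14 (k m : ℕ)
    (P Q : Matrix (Fin k) (Fin k) ℝ) (Γ : Matrix (Fin m) (Fin m) ℝ)
    (A : Matrix (Fin k) (Fin k) ℝ) (b C : Fin k → ℝ)
    (hP : P.PosDef) (hQ : Q.PosDef) (hΓ : Γ.PosDef)
    (hLyap : (-(P * A + Aᵀ * P + Q)).PosSemidef)
    (hPb : P.mulVec b = C)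
    (γ Dv : ℝ) (hγ : 0 < γ) (hDv : 0 < Dv)
    (φ : ℝ → Fin m → ℝ) (hφ : Continuous φ)
    (v : ℝ → ℝ → ℝ)
    (hv0 : ∀ t, v t 0 = 0)
    (hvbound : ∀ t lam, 0 ≤ lam → |v t lam| ≤ Dv * lam)
    (x₁ : ℝ → Fin k → ℝ) (x₂ : ℝ → Fin m → ℝ) (lam : ℝ → ℝ)
    (hlam : ∀ t, 0 ≤ lam t)
    (hode : ∀ t : ℝ,
      HasDerivAt x₁ (A.mulVec (x₁ t) + (φ t ⬝ᵥ x₂ t) • b + v t (lam t) • b) t ∧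
      HasDerivAt x₂ (-((C ⬝ᵥ x₁ t) • Γ.mulVec (φ t))) t ∧
      HasDerivAt lam (-γ * |C ⬝ᵥ x₁ t|) t)
    (V : ℝ → ℝ)
    (hV : ∀ t, V t = x₁ t ⬝ᵥ P.mulVec (x₁ t) + x₂ t ⬝ᵥ Γ⁻¹.mulVec (x₂ t) +
      (Dv / γ) * (lam t) ^ 2) :
    ∀ t : ℝ, ∃ d : ℝ, HasDerivAt V d t ∧ d ≤ -(x₁ t ⬝ᵥ Q.mulVec (x₁ t)) :=
  stmt_14_general k m P Q Γ A b C hP hΓ hLyap hPb γ Dv hγ φ v hvbound x₁ x₂ lam hlam hode V hV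
end
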